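/- With Q as above (the binomial coin-removal kernel on {k,...,2k} with parameter 1/p), for all t ≥ 1 and a ∈ {k,...,2k}, the total variation distance from the point mass at 2k satisfies ‖Q^t_a − δ_{2k}‖_TV = 1 − (1 − (1−1/p)^t)^{2k−a}. -/

import Mathlib

open Finset

noncomputable def Qker (p k : ℕ) : ℕ → ℕ → ℝ := fun a b =>
  if a ≤ b then
    (Nat.choose (2 * k - a) (2 * k - b) : ℝ) * (((p : ℝ) - 1) / p) ^ (2 * k - b) *
      (1 / (p : ℝ)) ^ (b - a)
  else 0

noncomputable def Qiter (p k a : ℕ) : ℕ → ℕ → ℝ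
  | 0 => fun b => if b = a then 1 else 0
  | t + 1 => fun b => ∑ c ∈ Finset.Icc k (2 * k), Qiter p k a t c * Qker p k c b

/-- Total variation distance on the state space `{k,…,2k}`. -/
noncomputable def tvIcc (k : ℕ) (μ ν : ℕ → ℝ) : ℝ :=
  (1 / 2) * ∑ b ∈ Finset.Icc k (2 * k), |μ b - ν b|


-- reindexing Icc k (2k) to range (k+1) via b ↦ 2k - b
lemma my_reindex (k : ℕ) (f : ℕ → ℝ) :
    ∑ b ∈ Finset.Icc k (2 * k), f b = ∑ z ∈ Finset.range (k + 1), f (2 * k - z) := by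
  apply Finset.sum_nbij' (i := fun b => 2 * k - b) (j := fun z => 2 * k - z)
  · intro b hb; simp only [mem_Icc] at hb; simp only [mem_range]; omega
  · intro z hz; simp only [mem_range] at hz; simp only [mem_Icc]; omega
  · intro b hb; simp only [mem_Icc] at hb; omega
  · intro z hz; simp only [mem_range] at hz; omega
  · intro b hb; simp only [mem_Icc] at hb
    congr 1; omega

-- the convolution identity
lemma my_conv (n x y : ℕ) (hx : x ≤ n) (u q r : ℝ) (hr : r = 1 - q) :
    ∑ z ∈ Finset.range (n + 1),
      ((x.choose z : ℝ) * u ^ z * (1 - u) ^ (x - z)) * ((z.choose y : ℝ) * q ^ y * r ^ (z - y))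
    = (x.choose y : ℝ) * (u * q) ^ y * (1 - u * q) ^ (x - y) := by
  by_cases hyx : y ≤ x
  · rw [← Finset.sum_subset (s₁ := Finset.Ico y (x + 1))]
    · rw [Finset.sum_Ico_eq_sum_range]
      have hxy1 : x + 1 - y = (x - y) + 1 := by omega
      rw [hxy1]
      have key : ∀ j ∈ Finset.range ((x - y) + 1),
          ((x.choose (y + j) : ℝ) * u ^ (y + j) * (1 - u) ^ (x - (y + j))) *
            (((y + j).choose y : ℝ) * q ^ y * r ^ (y + j - y))
          = ((x.choose y : ℝ) * (u * q) ^ y) *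
              (((x - y).choose j : ℝ) * (u * r) ^ j * (1 - u) ^ ((x - y) - j)) := by
        intro j hj
        simp only [mem_range] at hj
        have hc : (x.choose (y + j) : ℝ) * ((y + j).choose y : ℝ)
            = (x.choose y : ℝ) * ((x - y).choose j : ℝ) := by
          rw [← Nat.cast_mul, ← Nat.cast_mul, Nat.choose_mul (n := x) (k := y + j) (s := y) (by omega),
            Nat.add_sub_cancel_left]
        have h1 : y + j - y = j := by omega
        have h2 : x - (y + j) = (x - y) - j := by omega
        rw [h1, h2]
        calc ((x.choose (y + j) : ℝ) * u ^ (y + j) * (1 - u) ^ ((x - y) - j)) *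
              (((y + j).choose y : ℝ) * q ^ y * r ^ j)
            = ((x.choose (y + j) : ℝ) * ((y + j).choose y : ℝ)) *
              (u ^ (y + j) * q ^ y * r ^ j * (1 - u) ^ ((x - y) - j)) := by ring
          _ = ((x.choose y : ℝ) * ((x - y).choose j : ℝ)) *
              (u ^ (y + j) * q ^ y * r ^ j * (1 - u) ^ ((x - y) - j)) := by rw [hc]
          _ = _ := by rw [pow_add, mul_pow, mul_pow]; ring
      rw [Finset.sum_congr rfl key, ← Finset.mul_sum]
      have hbin : ∑ j ∈ Finset.range ((x - y) + 1),
          ((x - y).choose j : ℝ) * (u * r) ^ j * (1 - u) ^ ((x - y) - j)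
          = (1 - u * q) ^ (x - y) := by
        have := add_pow (u * r) (1 - u) (x - y)
        rw [show u * r + (1 - u) = 1 - u * q by rw [hr]; ring] at this
        rw [this]
        apply Finset.sum_congr rfl
        intro j hj; ring
      rw [hbin]
    · intro z hz; simp only [mem_Ico] at hz; simp only [mem_range]; omega
    · intro z hz hz2
      simp only [mem_range] at hz; simp only [mem_Ico, not_and, not_lt] at hz2
      by_cases hzy : z < y
      · rw [Nat.choose_eq_zero_of_lt hzy]; push_cast; ring
      · have : x < z := by omega
        rw [Nat.choose_eq_zero_of_lt this]; push_cast; ring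
  · push_neg at hyx
    rw [Nat.choose_eq_zero_of_lt hyx]
    rw [Finset.sum_eq_zero]
    · push_cast; ring
    · intro z hz
      simp only [mem_range] at hz
      by_cases hzy : z < y
      · rw [Nat.choose_eq_zero_of_lt hzy]; push_cast; ring
      · have : x < z := by omega
        rw [Nat.choose_eq_zero_of_lt this]; push_cast; ring

lemma my_Qker_eq (p k c b : ℕ) (hc2 : c ≤ 2 * k) (hb2 : b ≤ 2 * k) :
    Qker p k c b = ((2 * k - c).choose (2 * k - b) : ℝ) * (((p : ℝ) - 1) / p) ^ (2 * k - b) *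
      (1 / (p : ℝ)) ^ ((2 * k - c) - (2 * k - b)) := by
  unfold Qker
  by_cases h : c ≤ b
  · rw [if_pos h, show b - c = (2 * k - c) - (2 * k - b) from by omega]
  · rw [if_neg h]
    rw [Nat.choose_eq_zero_of_lt (by omega)]
    push_cast; ring

lemma my_Qiter_eq (p k a : ℕ) (hp : 2 ≤ p) (ha : k ≤ a) (ha2 : a ≤ 2 * k) (t : ℕ) :
    ∀ b, k ≤ b → b ≤ 2 * k →
    Qiter p k a t b = ((2 * k - a).choose (2 * k - b) : ℝ) *
      ((((p : ℝ) - 1) / p) ^ t) ^ (2 * k - b) *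
      (1 - (((p : ℝ) - 1) / p) ^ t) ^ ((2 * k - a) - (2 * k - b)) := by
  induction t with
  | zero =>
    intro b hb hb2
    simp only [Qiter, pow_zero, one_pow, one_mul, sub_self]
    rcases lt_trichotomy b a with h | h | h
    · rw [if_neg (by omega), Nat.choose_eq_zero_of_lt (by omega)]
      push_cast; ring
    · subst h
      rw [if_pos rfl, Nat.choose_self, Nat.sub_self, pow_zero]
      norm_num
    · rw [if_neg (by omega), zero_pow (by omega)]
      ring
  | succ t ih =>
    intro b hb hb2
    show ∑ c ∈ Finset.Icc k (2 * k), Qiter p k a t c * Qker p k c b = _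
    have hstep : ∀ c ∈ Finset.Icc k (2 * k),
        Qiter p k a t c * Qker p k c b =
        (((2 * k - a).choose (2 * k - c) : ℝ) *
          ((((p : ℝ) - 1) / p) ^ t) ^ (2 * k - c) *
          (1 - (((p : ℝ) - 1) / p) ^ t) ^ ((2 * k - a) - (2 * k - c))) *
        (((2 * k - c).choose (2 * k - b) : ℝ) * (((p : ℝ) - 1) / p) ^ (2 * k - b) *
          (1 / (p : ℝ)) ^ ((2 * k - c) - (2 * k - b))) := by
      intro c hc
      simp only [Finset.mem_Icc] at hc
      rw [ih c hc.1 hc.2, my_Qker_eq p k c b hc.2 hb2]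
    rw [Finset.sum_congr rfl hstep, my_reindex k
      (fun c => (((2 * k - a).choose (2 * k - c) : ℝ) *
          ((((p : ℝ) - 1) / p) ^ t) ^ (2 * k - c) *
          (1 - (((p : ℝ) - 1) / p) ^ t) ^ ((2 * k - a) - (2 * k - c))) *
        (((2 * k - c).choose (2 * k - b) : ℝ) * (((p : ℝ) - 1) / p) ^ (2 * k - b) *
          (1 / (p : ℝ)) ^ ((2 * k - c) - (2 * k - b))))]
    have hsimp : ∀ z ∈ Finset.range (k + 1),
        (((2 * k - a).choose (2 * k - (2 * k - z)) : ℝ) *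
          ((((p : ℝ) - 1) / p) ^ t) ^ (2 * k - (2 * k - z)) *
          (1 - (((p : ℝ) - 1) / p) ^ t) ^ ((2 * k - a) - (2 * k - (2 * k - z)))) *
        (((2 * k - (2 * k - z)).choose (2 * k - b) : ℝ) *
          (((p : ℝ) - 1) / p) ^ (2 * k - b) *
          (1 / (p : ℝ)) ^ ((2 * k - (2 * k - z)) - (2 * k - b))) =
        (((2 * k - a).choose z : ℝ) * ((((p : ℝ) - 1) / p) ^ t) ^ z *
          (1 - (((p : ℝ) - 1) / p) ^ t) ^ ((2 * k - a) - z)) *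
        ((z.choose (2 * k - b) : ℝ) * (((p : ℝ) - 1) / p) ^ (2 * k - b) *
          (1 / (p : ℝ)) ^ (z - (2 * k - b))) := by
      intro z hz
      simp only [Finset.mem_range] at hz
      have : 2 * k - (2 * k - z) = z := by omega
      rw [this]
    rw [Finset.sum_congr rfl hsimp,
      my_conv k (2 * k - a) (2 * k - b) (by omega) _ _ _ (by
        have hp0 : (p : ℝ) ≠ 0 := by
          simp only [ne_eq, Nat.cast_eq_zero]; omega
        field_simp; ring)]
    rw [← pow_succ]
lemma my_binsum (n x : ℕ) (hx : x ≤ n) (u : ℝ) :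
    ∑ z ∈ Finset.range (n + 1), (x.choose z : ℝ) * u ^ z * (1 - u) ^ (x - z) = 1 := by
  rw [← Finset.sum_subset (s₁ := Finset.range (x + 1))
    (by intro z hz; simp only [Finset.mem_range] at *; omega)
    (by intro z hz hz2
        simp only [Finset.mem_range] at hz hz2
        rw [Nat.choose_eq_zero_of_lt (by omega)]
        push_cast; ring)]
  have h := add_pow u (1 - u) x
  rw [show u + (1 - u) = 1 by ring, one_pow] at h
  rw [show (∑ z ∈ Finset.range (x + 1), (x.choose z : ℝ) * u ^ z * (1 - u) ^ (x - z)) =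
      ∑ m ∈ Finset.range (x + 1), u ^ m * (1 - u) ^ (x - m) * (x.choose m) from
    Finset.sum_congr rfl fun z _ => by ring]
  exact h.symm

lemma my_sum_one (p k a : ℕ) (hp : 2 ≤ p) (ha : k ≤ a) (ha2 : a ≤ 2 * k) (t : ℕ) :
    ∑ b ∈ Finset.Icc k (2 * k), Qiter p k a t b = 1 := by
  have h : ∀ b ∈ Finset.Icc k (2 * k), Qiter p k a t b =
      ((2 * k - a).choose (2 * k - b) : ℝ) * ((((p : ℝ) - 1) / p) ^ t) ^ (2 * k - b) *
      (1 - (((p : ℝ) - 1) / p) ^ t) ^ ((2 * k - a) - (2 * k - b)) := by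
    intro b hb
    simp only [Finset.mem_Icc] at hb
    exact my_Qiter_eq p k a hp ha ha2 t b hb.1 hb.2
  rw [Finset.sum_congr rfl h, my_reindex k (fun b =>
      ((2 * k - a).choose (2 * k - b) : ℝ) * ((((p : ℝ) - 1) / p) ^ t) ^ (2 * k - b) *
      (1 - (((p : ℝ) - 1) / p) ^ t) ^ ((2 * k - a) - (2 * k - b)))]
  have h2 : ∀ z ∈ Finset.range (k + 1),
      ((2 * k - a).choose (2 * k - (2 * k - z)) : ℝ) *
        ((((p : ℝ) - 1) / p) ^ t) ^ (2 * k - (2 * k - z)) *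
        (1 - (((p : ℝ) - 1) / p) ^ t) ^ ((2 * k - a) - (2 * k - (2 * k - z))) =
      ((2 * k - a).choose z : ℝ) * ((((p : ℝ) - 1) / p) ^ t) ^ z *
        (1 - (((p : ℝ) - 1) / p) ^ t) ^ ((2 * k - a) - z) := by
    intro z hz
    simp only [Finset.mem_range] at hz
    rw [show 2 * k - (2 * k - z) = z from by omega]
  rw [Finset.sum_congr rfl h2]
  exact my_binsum k (2 * k - a) (by omega) _

/-- For the coin-removal kernel `Q`,
`‖Q^t_a − δ_{2k}‖_TV = 1 − (1 − (1−1/p)^t)^{2k−a}` for all `t ≥ 1` and `a ∈ {k,…,2k}`. -/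
theorem stmt_8 (p k : ℕ) (hp : 2 ≤ p) (t : ℕ) (ht : 1 ≤ t)
    (a : ℕ) (ha : a ∈ Finset.Icc k (2 * k)) :
    tvIcc k (Qiter p k a t) (fun b => if b = 2 * k then 1 else 0) =
      1 - (1 - (1 - 1 / (p : ℝ)) ^ t) ^ (2 * k - a) := by
  simp only [Finset.mem_Icc] at ha
  obtain ⟨ha1, ha2⟩ := ha
  have hp0 : (p : ℝ) ≠ 0 := by simp only [ne_eq, Nat.cast_eq_zero]; omega
  have hp2 : (2 : ℝ) ≤ (p : ℝ) := by exact_mod_cast hp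
  have hq : ((p : ℝ) - 1) / p = 1 - 1 / p := by field_simp
  set u : ℝ := (((p : ℝ) - 1) / p) ^ t with hu
  have hq0 : 0 ≤ ((p : ℝ) - 1) / p := div_nonneg (by linarith) (by linarith)
  have hq1 : ((p : ℝ) - 1) / p ≤ 1 := by
    rw [div_le_one (by linarith)]; linarith
  have hu0 : 0 ≤ u := pow_nonneg hq0 t
  have hu1 : u ≤ 1 := pow_le_one₀ hq0 hq1
  have hnonneg : ∀ b ∈ Finset.Icc k (2 * k), 0 ≤ Qiter p k a t b := by
    intro b hb
    simp only [Finset.mem_Icc] at hb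
    rw [my_Qiter_eq p k a hp ha1 ha2 t b hb.1 hb.2]
    apply mul_nonneg (mul_nonneg (Nat.cast_nonneg _) (pow_nonneg (pow_nonneg hq0 t) _))
    exact pow_nonneg (by linarith [pow_le_one₀ hq0 hq1 (n := t)]) _
  have hsum : ∑ b ∈ Finset.Icc k (2 * k), Qiter p k a t b = 1 :=
    my_sum_one p k a hp ha1 ha2 t
  have htop : Qiter p k a t (2 * k) = (1 - u) ^ (2 * k - a) := by
    rw [my_Qiter_eq p k a hp ha1 ha2 t (2 * k) (by omega) le_rfl]
    simp
    rfl
  have hmem : 2 * k ∈ Finset.Icc k (2 * k) := by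
    simp only [Finset.mem_Icc]; omega
  have hle : Qiter p k a t (2 * k) ≤ 1 := by
    rw [← hsum]
    exact Finset.single_le_sum hnonneg hmem
  unfold tvIcc
  rw [← Finset.add_sum_erase _ _ hmem]
  have h1 : |Qiter p k a t (2 * k) - (if 2 * k = 2 * k then (1 : ℝ) else 0)| =
      1 - Qiter p k a t (2 * k) := by
    rw [if_pos rfl, abs_of_nonpos (by linarith)]
    ring
  have h2 : ∑ b ∈ (Finset.Icc k (2 * k)).erase (2 * k),
      |Qiter p k a t b - (if b = 2 * k then (1 : ℝ) else 0)| =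
      ∑ b ∈ (Finset.Icc k (2 * k)).erase (2 * k), Qiter p k a t b := by
    apply Finset.sum_congr rfl
    intro b hb
    have hbne : b ≠ 2 * k := (Finset.mem_erase.mp hb).1
    rw [if_neg hbne, sub_zero, abs_of_nonneg (hnonneg b (Finset.mem_erase.mp hb).2)]
  have h3 : ∑ b ∈ (Finset.Icc k (2 * k)).erase (2 * k), Qiter p k a t b =
      1 - Qiter p k a t (2 * k) := by
    rw [← hsum, ← Finset.add_sum_erase _ _ hmem]
    ring
  rw [h1, h2, h3, htop, hu, hq]
  ring
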